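/- In the commutative *-algebra O(S⁷) generated by z₁,z₂,z₃,z₄ and their conjugates with relation Σ z_a* z_a = 1, the coinvariant elements α = 2(z₁z₃* + z₂*z₄), β = 2(z₂z₃* − z₁*z₄), x = z₁z₁* + z₂z₂* − z₃z₃* − z₄z₄* satisfy the 4-sphere relation α*α + β*β + x² = 1 and the identities (1−x)z₁ = αz₃ − β*z₄, (1−x)z₂ = α*z₄ + βz₃, (1+x)z₃ = α*z₁ + β*z₂, (1+x)z₄ = αz₂ − βz₁. -/
import Mathlib


/-!
STATEMENT 19: in the commutative *-algebra `O(S⁷)` with generators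
`z₁,…,z₄` and their conjugates satisfying `Σ z_a* z_a = 1`, the coinvariants
`α, β, x` satisfy the 4-sphere relation `α*α + β*β + x² = 1` (with `x* = x`)
and the stated degree-three identities.
-/

open Finset in
/-- The sphere relation and the identities among the generators of `O(S⁴)`
inside `O(S⁷)`, stated in any commutative *-ring containing elements
`z 0, z 1, z 2, z 3` with `Σ (z a)* (z a) = 1`. -/
theorem sphere_coinvariant_identities
    {A : Type*} [CommRing A] [StarRing A]
    (z : Fin 4 → A) (hsphere : ∑ a, star (z a) * z a = 1) :
    let α := 2 * (z 0 * star (z 2) + star (z 1) * z 3)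
    let β := 2 * (z 1 * star (z 2) - star (z 0) * z 3)
    let x := z 0 * star (z 0) + z 1 * star (z 1) - z 2 * star (z 2)
      - z 3 * star (z 3)
    star x = x ∧
    star α * α + star β * β + x ^ 2 = 1 ∧
    (1 - x) * z 0 = α * z 2 - star β * z 3 ∧
    (1 - x) * z 1 = star α * z 3 + β * z 2 ∧
    (1 + x) * z 2 = star α * z 0 + star β * z 1 ∧
    (1 + x) * z 3 = α * z 1 - β * z 0 := by
  intro α β x
  simp only [Fin.sum_univ_four] at hsphere
  refine ⟨?_, ?_, ?_, ?_, ?_, ?_⟩ <;>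
    simp only [α, β, x, star_mul, star_add, star_sub, star_star, star_ofNat]
  · linear_combination (star (z 0) * z 0 + star (z 1) * z 1 + star (z 2) * z 2
      + star (z 3) * z 3 + 1) * hsphere
  · linear_combination (-(z 0)) * hsphere
  · linear_combination (-(z 1)) * hsphere
  · linear_combination (-(z 2)) * hsphere
  · linear_combination (-(z 3)) * hsphere
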